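/- Let U ∈ ℝ^{n×d} satisfy: its first column is (1/√n)1_n, max_{i,j} |U_{ij}| ≤ 1/√(n-2d), and let Λ = diag(n/2, n/(12d), ..., n/(12d)). Set X = U Λ^{1/2} and let x_i denote the rows of X. Then for any signature matrix I_{p,q} (p+q=d, with +1 in the first coordinate) and all n ≥ 4d and all i, j: 1/3 ≤ x_iᵀ I_{p,q} x_j ≤ 2/3. -/

import Mathlib

/-! The leading eigenvalue contributes exactly `(n/2)·(1/√n)² = 1/2` to `x_iᵀ I_{p,q} x_j`.
Each of the remaining `d - 1` terms is at most `n/(12d) · 1/(n-2d)` in absolute value, and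
`n/(n-2d) ≤ 2` once `n ≥ 4d`, so together they perturb `1/2` by at most `1/6`. -/

open Finset

theorem abs_sum_sub_le_of_forall_ne {ι : Type*} [Fintype ι] (f : ι → ℝ) (z : ι) {c : ℝ}
    (h : ∀ ℓ, ℓ ≠ z → |f ℓ| ≤ c) : |∑ ℓ, f ℓ - f z| ≤ (Fintype.card ι - 1 : ℕ) * c := by
  classical
  rw [← Finset.add_sum_erase _ f (mem_univ z), add_sub_cancel_left]
  calc |∑ ℓ ∈ univ.erase z, f ℓ|
      ≤ ∑ ℓ ∈ univ.erase z, |f ℓ| := abs_sum_le_sum_abs _ _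
    _ ≤ (univ.erase z).card • c := sum_le_card_nsmul _ _ _ fun ℓ hℓ => h ℓ (ne_of_mem_erase hℓ)
    _ = (Fintype.card ι - 1 : ℕ) * c := by
      rw [card_erase_of_mem (mem_univ z), card_univ, nsmul_eq_mul]

theorem abs_mul_mul_mul_le {ω c a b B : ℝ} (hω : |ω| ≤ 1) (hc : 0 ≤ c) (ha : |a| ≤ B)
    (hb : |b| ≤ B) : |ω * c * a * b| ≤ c * B ^ 2 := by
  rw [abs_mul, abs_mul, abs_mul, abs_of_nonneg hc, sq]
  have hB : 0 ≤ B := (abs_nonneg a).trans ha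
  calc |ω| * c * |a| * |b| ≤ 1 * c * B * B := by gcongr
    _ = c * (B * B) := by ring

theorem one_div_sqrt_sq {m : ℝ} (hm : 0 ≤ m) : (1 / Real.sqrt m) ^ 2 = 1 / m := by
  rw [div_pow, one_pow, Real.sq_sqrt hm]

theorem sub_one_mul_div_mul_one_div_le {n d : ℝ} (hd : 1 ≤ d) (hn : 4 * d ≤ n) :
    (d - 1) * (n / (12 * d) * (1 / (n - 2 * d))) ≤ 1 / 6 := by
  have hm : 0 < n - 2 * d := by linarith
  rw [mul_one_div, div_div, mul_div_assoc', div_le_iff₀ (by positivity)]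
  nlinarith

/-- For `U ∈ ℝ^{n×d}` with first column `(1/√n)1`, entrywise bound
`|U_{ij}| ≤ 1/√(n-2d)`, and `Λ = diag(n/2, n/(12d), ..., n/(12d))`, the rows
`x_i` of `X = UΛ^{1/2}` satisfy `1/3 ≤ x_iᵀ I_{p,q} x_j ≤ 2/3` for all `i, j`,
whenever `n ≥ 4d` and the first signature entry is `+1`. -/
theorem stmt_17 {n d : ℕ} (hd : 0 < d) (hn : 4 * d ≤ n)
    (U : Matrix (Fin n) (Fin d) ℝ)
    (hcol : ∀ i, U i ⟨0, hd⟩ = 1 / Real.sqrt n)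
    (hbound : ∀ i j, |U i j| ≤ 1 / Real.sqrt ((n : ℝ) - 2 * d))
    (ω : Fin d → ℝ) (hω1 : ω ⟨0, hd⟩ = 1) (hω : ∀ j, ω j = 1 ∨ ω j = -1) :
    ∀ i j : Fin n,
      (1 / 3 : ℝ) ≤ ∑ ℓ : Fin d,
          ω ℓ * (if ℓ = ⟨0, hd⟩ then (n : ℝ) / 2 else (n : ℝ) / (12 * d)) * U i ℓ * U j ℓ ∧
      (∑ ℓ : Fin d,
          ω ℓ * (if ℓ = ⟨0, hd⟩ then (n : ℝ) / 2 else (n : ℝ) / (12 * d)) * U i ℓ * U j ℓ)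
        ≤ 2 / 3 := by
  intro i j
  have hd1 : (1 : ℝ) ≤ d := by exact_mod_cast hd
  have hn4 : (4 : ℝ) * d ≤ n := by exact_mod_cast hn
  set f : Fin d → ℝ := fun ℓ =>
    ω ℓ * (if ℓ = ⟨0, hd⟩ then (n : ℝ) / 2 else (n : ℝ) / (12 * d)) * U i ℓ * U j ℓ
  have hlead : f ⟨0, hd⟩ = 1 / 2 := by
    have hn0 : (0 : ℝ) < n := by linarith
    simp only [f, if_pos, hω1, hcol, one_mul, mul_assoc, ← sq, one_div_sqrt_sq hn0.le]
    field_simp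
  have htail : ∀ ℓ, ℓ ≠ ⟨0, hd⟩ → |f ℓ| ≤ (n : ℝ) / (12 * d) * (1 / ((n : ℝ) - 2 * d)) := by
    intro ℓ hℓ
    rw [← one_div_sqrt_sq (by linarith)]
    simp only [f, if_neg hℓ]
    exact abs_mul_mul_mul_le (by rcases hω ℓ with h | h <;> simp [h]) (by positivity)
      (hbound i ℓ) (hbound j ℓ)
  have hsum := abs_sum_sub_le_of_forall_ne f _ htail
  rw [Fintype.card_fin, Nat.cast_pred hd, hlead] at hsum
  have hsmall := sub_one_mul_div_mul_one_div_le hd1 hn4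
  constructor <;> linarith [(abs_le.mp hsum).1, (abs_le.mp hsum).2]
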